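/- arXiv:2202.04912 — 2 statements merged into one kernel-verified Lean document; each statement's English description precedes it below -/
import Mathlib

section
/- For the Log-Cholesky distance on symmetric positive-definite matrices, the weighted Fréchet mean of Y₁,...,Yₙ with weights α_i ≥ 0, ∑α_i = 1, is obtained by: taking Cholesky factors P_i = 𝓛(Y_i), forming P̄ with strictly lower part ∑α_i⌊P_i⌋ and diagonal exp(∑α_i log 𝔻(P_i)), and returning P̄P̄ᵀ; i.e., this matrix minimizes ∑ α_i d_L²(Y_i, ·). -/
open Finset Matrix

/-- Strictly lower triangular part of a matrix. -/
def strictLower {m : ℕ} (P : Matrix (Fin m) (Fin m) ℝ) :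
    Matrix (Fin m) (Fin m) ℝ :=
  fun i j => if j < i then P i j else 0

/-- Squared Log-Cholesky distance between SPD matrices, expressed via their
Cholesky factors `P, Q` (lower triangular with positive diagonal):
`d_L² = ‖⌊P⌋−⌊Q⌋‖_F² + ‖log 𝔻(P) − log 𝔻(Q)‖_F²`. -/
noncomputable def dL2 {m : ℕ} (P Q : Matrix (Fin m) (Fin m) ℝ) : ℝ :=
  (∑ i, ∑ j, (strictLower P i j - strictLower Q i j) ^ 2) +
    ∑ i, (Real.log (P i i) - Real.log (Q i i)) ^ 2

/-- The Cholesky factor `P̄` of the claimed Log-Cholesky Fréchet mean: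
strict lower part `∑ αₖ ⌊Pₖ⌋` and diagonal `exp(∑ αₖ log 𝔻(Pₖ))`. -/
noncomputable def cholMean {m n : ℕ} (α : Fin n → ℝ) (P : Fin n → Matrix (Fin m) (Fin m) ℝ) :
    Matrix (Fin m) (Fin m) ℝ :=
  fun i j =>
    if j < i then ∑ k, α k * P k i j
    else if i = j then Real.exp (∑ k, α k * Real.log (P k i i))
    else 0

/-- Key scalar fact: with convex weights, the weighted mean minimizes the
weighted sum of squared deviations. -/
lemma key_min {n : ℕ} (α x : Fin n → ℝ) (hsum : ∑ k, α k = 1) (c : ℝ) :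
    ∑ k, α k * (x k - ∑ j, α j * x j) ^ 2 ≤ ∑ k, α k * (x k - c) ^ 2 := by
  set μ := ∑ j, α j * x j with hμ
  have h1 : ∑ k, α k * (x k - c) ^ 2
      = ∑ k, α k * (x k - μ) ^ 2 + (c - μ) ^ 2 := by
    have h : ∀ k ∈ Finset.univ, α k * (x k - c) ^ 2
        = α k * (x k - μ) ^ 2 + (α k * (c ^ 2 - μ ^ 2) - (2 * (c - μ)) * (α k * x k)) := by
      intro k _; ring
    rw [Finset.sum_congr rfl h, Finset.sum_add_distrib, Finset.sum_sub_distrib,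
      ← Finset.sum_mul, ← Finset.mul_sum, hsum, ← hμ]
    ring
  nlinarith [sq_nonneg (c - μ)]

lemma sl_mean {m n : ℕ} (α : Fin n → ℝ) (P : Fin n → Matrix (Fin m) (Fin m) ℝ)
    (i j : Fin m) :
    strictLower (cholMean α P) i j = ∑ k, α k * strictLower (P k) i j := by
  unfold strictLower cholMean
  by_cases h : j < i <;> simp [h]

lemma log_mean {m n : ℕ} (α : Fin n → ℝ) (P : Fin n → Matrix (Fin m) (Fin m) ℝ)
    (i : Fin m) :
    Real.log (cholMean α P i i) = ∑ k, α k * Real.log (P k i i) := by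
  simp [cholMean, lt_irrefl]

lemma swap_sums {m n : ℕ} (α : Fin n → ℝ) (P : Fin n → Matrix (Fin m) (Fin m) ℝ)
    (Q : Matrix (Fin m) (Fin m) ℝ) :
    ∑ k, α k * dL2 (P k) Q
      = (∑ i, ∑ j, ∑ k, α k * (strictLower (P k) i j - strictLower Q i j) ^ 2)
        + ∑ i, ∑ k, α k * (Real.log (P k i i) - Real.log (Q i i)) ^ 2 := by
  unfold dL2
  simp_rw [mul_add, Finset.sum_add_distrib, Finset.mul_sum]
  congr 1
  · rw [Finset.sum_comm]
    exact Finset.sum_congr rfl fun i _ => Finset.sum_comm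
  · exact Finset.sum_comm

/-- For the Log-Cholesky distance on SPD matrices, the weighted
Fréchet mean of `Yₖ = Pₖ Pₖᵀ` with weights `αₖ ≥ 0`, `∑ αₖ = 1` is
`P̄ P̄ᵀ` where `P̄ = cholMean α P`: the matrix `P̄` is again lower triangular
with positive diagonal, and `P̄ P̄ᵀ` minimizes `∑ αₖ d_L²(Yₖ, ·)` over SPD
matrices `Z = Q Qᵀ` (parametrized by their Cholesky factors `Q`). -/
theorem logCholesky_weighted_frechet_mean
    (m n : ℕ) (α : Fin n → ℝ) (hα : ∀ k, 0 ≤ α k) (hsum : ∑ k, α k = 1)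
    (P : Fin n → Matrix (Fin m) (Fin m) ℝ)
    (hlow : ∀ k, ∀ i j : Fin m, i < j → P k i j = 0)
    (hdiag : ∀ k, ∀ i : Fin m, 0 < P k i i) :
    (∀ i j : Fin m, i < j → cholMean α P i j = 0) ∧
    (∀ i : Fin m, 0 < cholMean α P i i) ∧
    (∀ Q : Matrix (Fin m) (Fin m) ℝ,
      (∀ i j : Fin m, i < j → Q i j = 0) → (∀ i : Fin m, 0 < Q i i) →
      ∑ k, α k * dL2 (P k) (cholMean α P) ≤ ∑ k, α k * dL2 (P k) Q) := by
  refine ⟨?_, ?_, ?_⟩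
  · intro i j hij
    simp [cholMean, not_lt_of_gt hij, (ne_of_lt hij)]
  · intro i
    simp [cholMean, lt_irrefl]
    exact Real.exp_pos _
  · intro Q _ _
    rw [swap_sums, swap_sums]
    refine add_le_add ?_ ?_
    · refine Finset.sum_le_sum fun i _ => Finset.sum_le_sum fun j _ => ?_
      simp_rw [sl_mean]
      exact key_min α (fun k => strictLower (P k) i j) hsum _
    · refine Finset.sum_le_sum fun i _ => ?_
      simp_rw [log_mean]
      exact key_min α (fun k => Real.log (P k i i)) hsum _
end

section
/- The Log-Cholesky map is an isometry onto a Euclidean space: the map Φ(Y) = (⌊𝓛(Y)⌋, log 𝔻(𝓛(Y))) from m×m SPD matrices to (strictly lower triangular matrices) × (diagonal matrices) ≅ ℝ^{m(m+1)/2} satisfies d_L(Y₁, Y₂) = ‖Φ(Y₁) − Φ(Y₂)‖ for all SPD Y₁, Y₂, and is a bijection. -/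
open Finset Matrix

/-- Strictly lower triangular part of a matrix. -/
def strictLowerPart {m : ℕ} (P : Matrix (Fin m) (Fin m) ℝ) :
    Matrix (Fin m) (Fin m) ℝ :=
  fun i j => if j < i then P i j else 0

/-- Log-Cholesky distance expressed via Cholesky factors `P, Q`. -/
noncomputable def dLfac {m : ℕ} (P Q : Matrix (Fin m) (Fin m) ℝ) : ℝ :=
  Real.sqrt ((∑ i, ∑ j, (strictLowerPart P i j - strictLowerPart Q i j) ^ 2) +
    ∑ i, (Real.log (P i i) - Real.log (Q i i)) ^ 2)

/-- Symmetric positive-definite `m × m` real matrices. -/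
def SPD (m : ℕ) := {Y : Matrix (Fin m) (Fin m) ℝ // Y.PosDef}

/-- Strictly lower triangular `m × m` real matrices. -/
def StrictLowerTriangular (m : ℕ) :=
  {A : Matrix (Fin m) (Fin m) ℝ // ∀ i j : Fin m, i ≤ j → A i j = 0}

/-!
The Log-Cholesky coordinates `L ↦ (⌊L⌋, log 𝔻(L))` of a lower triangular matrix with positive
diagonal are inverted by `(A, v) ↦ A + diag(exp v)`, so `Φ` is a bijection as soon as `Y ↦ 𝓛(Y)` is
a bijection from SPD matrices onto such matrices, with inverse `L ↦ L Lᵀ`. The factor exists: the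
LDL decomposition `Y = L D Lᵀ` gives `Y = B Bᵀ` with `B = L √D`, and multiplying the columns of `B`
by the signs of its diagonal makes the diagonal positive. It is unique: for two factors `L₁, L₂`,
`L₂⁻¹ L₁` is lower triangular with positive diagonal and orthogonal, hence the identity.
The distance identity is the definition of `d_L` read in these coordinates.
-/

namespace Matrix

open OrderDual

variable {n : Type*} [Fintype n] [LinearOrder n]

theorem IsLowerTriangular.mul_apply_self {R : Type*} [NonUnitalNonAssocSemiring R]
    {A B : Matrix n n R} (hA : A.IsLowerTriangular) (hB : B.IsLowerTriangular) (i : n) :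
    (A * B) i i = A i i * B i i := by
  rw [mul_apply]
  refine Finset.sum_eq_single i (fun k _ hki => ?_) (by simp)
  rcases hki.lt_or_gt with hlt | hgt
  · rw [hB (show toDual i < toDual k from hlt), mul_zero]
  · rw [hA (show toDual k < toDual i from hgt), zero_mul]

theorem IsLowerTriangular.inv {K : Type*} [Field K] {L : Matrix n n K}
    (hL : L.IsLowerTriangular) : L⁻¹.IsLowerTriangular := by
  by_cases h : IsUnit L.det
  · have := invertibleOfIsUnitDet L h
    exact blockTriangular_inv_of_blockTriangular hL
  · rw [nonsing_inv_apply_not_isUnit L h]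
    exact blockTriangular_zero

theorem IsLowerTriangular.inv_apply_self {K : Type*} [Field K] {L : Matrix n n K}
    (hL : L.IsLowerTriangular) (hdet : IsUnit L.det) (i : n) : L⁻¹ i i = (L i i)⁻¹ := by
  have h := hL.inv.mul_apply_self hL i
  rw [nonsing_inv_mul L hdet, one_apply_eq] at h
  exact eq_inv_of_mul_eq_one_left h.symm

theorem IsLowerTriangular.isUnit_det_of_diag_pos {L : Matrix n n ℝ}
    (hL : L.IsLowerTriangular) (hpos : ∀ i, 0 < L i i) : IsUnit L.det := by
  rw [det_of_isLowerTriangular L hL]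
  exact (Finset.prod_pos fun i _ => hpos i).ne'.isUnit

/-- `Mᵀ = M⁻¹` is lower triangular too, so `M` is diagonal, with diagonal entries squaring to `1`. -/
theorem IsLowerTriangular.eq_one_of_mul_transpose_eq_one {M : Matrix n n ℝ}
    (hM : M.IsLowerTriangular) (hpos : ∀ i, 0 < M i i) (horth : M * Mᵀ = 1) : M = 1 := by
  have hMt : Mᵀ.IsLowerTriangular := by
    rw [← inv_eq_right_inv horth]
    exact hM.inv
  have hdiag : ∀ i, M i i * M i i = 1 := fun i => by
    simpa [hM.mul_apply_self hMt i] using congrFun (congrFun horth i) i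
  ext i j
  rcases lt_trichotomy i j with hij | rfl | hij
  · rw [hM (show toDual j < toDual i from hij), one_apply_ne hij.ne]
  · have := hpos i
    rw [one_apply_eq]
    nlinarith [hdiag i]
  · simpa [one_apply_ne hij.ne'] using hMt (show toDual i < toDual j from hij)

structure IsCholeskyFactor (L S : Matrix n n ℝ) : Prop where
  isLowerTriangular : L.IsLowerTriangular
  diag_pos : ∀ i, 0 < L i i
  mul_transpose_self : L * Lᵀ = S

theorem IsCholeskyFactor.posDef {L S : Matrix n n ℝ} (h : IsCholeskyFactor L S) : S.PosDef := by
  rw [← h.mul_transpose_self]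
  simpa using PosDef.mul_conjTranspose_self L (vecMul_injective_iff_isUnit.mpr
    ((isUnit_iff_isUnit_det L).mpr (h.isLowerTriangular.isUnit_det_of_diag_pos h.diag_pos)))

theorem IsCholeskyFactor.unique {L₁ L₂ S : Matrix n n ℝ} (h₁ : IsCholeskyFactor L₁ S)
    (h₂ : IsCholeskyFactor L₂ S) : L₁ = L₂ := by
  have hinv₂ : L₂⁻¹.IsLowerTriangular := h₂.isLowerTriangular.inv
  have hdet₂ : IsUnit L₂.det := h₂.isLowerTriangular.isUnit_det_of_diag_pos h₂.diag_pos
  have hdet₂t : IsUnit L₂ᵀ.det := by rwa [det_transpose]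
  have hM : (L₂⁻¹ * L₁).IsLowerTriangular := hinv₂.mul h₁.isLowerTriangular
  have hpos : ∀ i, 0 < (L₂⁻¹ * L₁) i i := fun i => by
    rw [hinv₂.mul_apply_self h₁.isLowerTriangular, h₂.isLowerTriangular.inv_apply_self hdet₂]
    exact mul_pos (inv_pos.2 (h₂.diag_pos i)) (h₁.diag_pos i)
  have horth : L₂⁻¹ * L₁ * (L₂⁻¹ * L₁)ᵀ = 1 := by
    calc L₂⁻¹ * L₁ * (L₂⁻¹ * L₁)ᵀ = L₂⁻¹ * (L₁ * L₁ᵀ) * L₂ᵀ⁻¹ := by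
          simp only [transpose_mul, transpose_nonsing_inv, Matrix.mul_assoc]
      _ = (L₂⁻¹ * L₂) * (L₂ᵀ * L₂ᵀ⁻¹) := by
          rw [h₁.mul_transpose_self, ← h₂.mul_transpose_self]
          simp only [Matrix.mul_assoc]
      _ = 1 := by rw [nonsing_inv_mul _ hdet₂, mul_nonsing_inv _ hdet₂t, one_mul]
  calc L₁ = L₂ * (L₂⁻¹ * L₁) := by
        rw [← Matrix.mul_assoc, mul_nonsing_inv _ hdet₂, Matrix.one_mul]
    _ = L₂ := by rw [hM.eq_one_of_mul_transpose_eq_one hpos horth, Matrix.mul_one]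

theorem IsLowerTriangular.isCholeskyFactor_mul_diagonal_sign {B : Matrix n n ℝ}
    (hB : B.IsLowerTriangular) (hdet : IsUnit B.det) :
    IsCholeskyFactor (B * diagonal fun i => (SignType.sign (B i i) : ℝ)) (B * Bᵀ) := by
  have hdiag : ∀ i, B i i ≠ 0 := by
    rw [det_of_isLowerTriangular B hB] at hdet
    exact fun i => Finset.prod_ne_zero_iff.mp hdet.ne_zero i (Finset.mem_univ i)
  have hsign : ∀ i, (SignType.sign (B i i) : ℝ) * SignType.sign (B i i) = 1 := fun i => by
    rcases (hdiag i).lt_or_gt with h | h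
    · simp [sign_neg h]
    · simp [sign_pos h]
  refine ⟨hB.mul (blockTriangular_diagonal _), fun i => ?_, ?_⟩
  · rw [hB.mul_apply_self (blockTriangular_diagonal _), diagonal_apply_eq, self_mul_sign]
    exact abs_pos.mpr (hdiag i)
  · rw [transpose_mul, diagonal_transpose, Matrix.mul_assoc, ← Matrix.mul_assoc (diagonal _),
      diagonal_mul_diagonal, funext hsign, diagonal_one, Matrix.one_mul]

theorem PosDef.exists_isLowerTriangular_mul_transpose_eq [WellFoundedLT n]
    [LocallyFiniteOrderBot n] {S : Matrix n n ℝ} (hS : S.PosDef) :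
    ∃ B : Matrix n n ℝ, B.IsLowerTriangular ∧ IsUnit B.det ∧ B * Bᵀ = S := by
  have hlowerInv : (LDL.lowerInv hS).IsLowerTriangular := fun _ _ hij =>
    LDL.lowerInv_triangular hS hij
  have hd : ∀ i, 0 < LDL.diagEntries hS i := fun i => by
    have hD : (LDL.diag hS).PosDef := by
      rw [LDL.diag_eq_lowerInv_conj]
      exact hS.mul_mul_conjTranspose_same (vecMul_injective_iff_isUnit.mpr
        ((isUnit_iff_isUnit_det _).mpr (isUnit_det_of_invertible _)))
    simpa [LDL.diag] using hD.diag_pos (i := i)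
  set R := diagonal fun i => √(LDL.diagEntries hS i)
  have hroot : R * Rᵀ = LDL.diag hS := by
    rw [diagonal_transpose, diagonal_mul_diagonal, LDL.diag]
    exact congrArg diagonal (funext fun i => Real.mul_self_sqrt (hd i).le)
  refine ⟨LDL.lower hS * R, hlowerInv.inv.mul (blockTriangular_diagonal _), ?_, ?_⟩
  · rw [det_mul, det_diagonal]
    exact (isUnit_nonsing_inv_det _ (isUnit_det_of_invertible _)).mul
      (Finset.prod_pos fun i _ => Real.sqrt_pos.2 (hd i)).ne'.isUnit
  · calc _ = LDL.lower hS * LDL.diag hS * (LDL.lower hS)ᴴ := by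
          rw [transpose_mul, Matrix.mul_assoc, ← Matrix.mul_assoc R, hroot,
            conjTranspose_eq_transpose_of_trivial, Matrix.mul_assoc]
      _ = S := LDL.lower_conj_diag hS

theorem PosDef.exists_isCholeskyFactor [WellFoundedLT n] [LocallyFiniteOrderBot n]
    {S : Matrix n n ℝ} (hS : S.PosDef) : ∃ L : Matrix n n ℝ, IsCholeskyFactor L S := by
  obtain ⟨B, hB, hdet, rfl⟩ := hS.exists_isLowerTriangular_mul_transpose_eq
  exact ⟨_, hB.isCholeskyFactor_mul_diagonal_sign hdet⟩

end Matrix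

section LogCholesky

variable {m : ℕ}

noncomputable def logCholesky (L : Matrix (Fin m) (Fin m) ℝ) :
    StrictLowerTriangular m × (Fin m → ℝ) :=
  (⟨strictLowerPart L, fun _ _ hij => if_neg hij.not_gt⟩, fun i => Real.log (L i i))

noncomputable def ofLogCholesky (p : StrictLowerTriangular m × (Fin m → ℝ)) :
    Matrix (Fin m) (Fin m) ℝ :=
  p.1.1 + diagonal fun i => Real.exp (p.2 i)

theorem isCholeskyFactor_ofLogCholesky (p : StrictLowerTriangular m × (Fin m → ℝ)) :
    (ofLogCholesky p).IsCholeskyFactor (ofLogCholesky p * (ofLogCholesky p)ᵀ) where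
  isLowerTriangular := BlockTriangular.add (fun i j hij => p.1.2 i j (le_of_lt hij))
    (blockTriangular_diagonal _)
  diag_pos i := by simp [ofLogCholesky, p.1.2 i i le_rfl, Real.exp_pos]
  mul_transpose_self := rfl

theorem logCholesky_ofLogCholesky (p : StrictLowerTriangular m × (Fin m → ℝ)) :
    logCholesky (ofLogCholesky p) = p := by
  refine Prod.ext (Subtype.ext (funext₂ fun i j => ?_)) (funext fun i => ?_)
  · rcases lt_or_ge j i with hji | hij
    · simp [logCholesky, strictLowerPart, ofLogCholesky, hji, diagonal_apply_ne _ hji.ne']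
    · simp [logCholesky, strictLowerPart, not_lt.2 hij, p.1.2 i j hij]
  · simp [logCholesky, ofLogCholesky, p.1.2 i i le_rfl]

theorem ofLogCholesky_logCholesky {L : Matrix (Fin m) (Fin m) ℝ} (hL : L.IsLowerTriangular)
    (hpos : ∀ i, 0 < L i i) : ofLogCholesky (logCholesky L) = L := by
  ext i j
  rcases lt_trichotomy j i with hji | rfl | hij
  · simp [logCholesky, strictLowerPart, ofLogCholesky, hji, diagonal_apply_ne _ hji.ne']
  · simp [logCholesky, strictLowerPart, ofLogCholesky, Real.exp_log (hpos j)]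
  · simp [logCholesky, strictLowerPart, ofLogCholesky, hij.not_gt, diagonal_apply_ne _ hij.ne,
      hL (show OrderDual.toDual j < OrderDual.toDual i from hij)]

end LogCholesky

/-- The Log-Cholesky map is a bijective isometry onto a
Euclidean space: there is a Cholesky factorization map `chol` on SPD matrices
(lower triangular with positive diagonal, `chol Y ⬝ (chol Y)ᵀ = Y`), and the
map `Φ(Y) = (⌊chol Y⌋, log 𝔻(chol Y))` into
(strictly lower triangular matrices) × ℝ^m ≅ ℝ^{m(m+1)/2} is a bijection
satisfying `d_L(Y₁, Y₂) = ‖Φ(Y₁) − Φ(Y₂)‖`. -/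
theorem logCholesky_isometry_bijective (m : ℕ) :
    ∃ chol : SPD m → Matrix (Fin m) (Fin m) ℝ,
      (∀ Y : SPD m, (∀ i j : Fin m, i < j → chol Y i j = 0) ∧
        (∀ i : Fin m, 0 < chol Y i i) ∧ chol Y * (chol Y)ᵀ = Y.1) ∧
      ∃ Φ : SPD m → StrictLowerTriangular m × (Fin m → ℝ),
        (∀ Y : SPD m, ((Φ Y).1.1 : Matrix (Fin m) (Fin m) ℝ)
            = strictLowerPart (chol Y)) ∧
        (∀ Y : SPD m, ∀ i : Fin m, (Φ Y).2 i = Real.log (chol Y i i)) ∧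
        Function.Bijective Φ ∧
        (∀ Y₁ Y₂ : SPD m, dLfac (chol Y₁) (chol Y₂) =
          Real.sqrt ((∑ i, ∑ j, ((Φ Y₁).1.1 i j - (Φ Y₂).1.1 i j) ^ 2) +
            ∑ i, ((Φ Y₁).2 i - (Φ Y₂).2 i) ^ 2)) := by
  choose chol hchol using fun Y : SPD m => Y.2.exists_isCholeskyFactor
  refine ⟨chol, fun Y => ⟨(hchol Y).isLowerTriangular, (hchol Y).diag_pos,
    (hchol Y).mul_transpose_self⟩, logCholesky ∘ chol, fun _ => rfl, fun _ _ => rfl, ?_,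
    fun _ _ => rfl⟩
  let expMap : StrictLowerTriangular m × (Fin m → ℝ) → SPD m :=
    fun p => ⟨_, (isCholeskyFactor_ofLogCholesky p).posDef⟩
  refine Function.bijective_iff_has_inverse.mpr ⟨expMap, fun Y => Subtype.ext ?_, fun p => ?_⟩
  · simp only [expMap, Function.comp_apply,
      ofLogCholesky_logCholesky (hchol Y).isLowerTriangular (hchol Y).diag_pos,
      (hchol Y).mul_transpose_self]
  · have hfactor : chol (expMap p) = ofLogCholesky p :=
      (hchol (expMap p)).unique (isCholeskyFactor_ofLogCholesky p)
    simp only [Function.comp_apply, hfactor, logCholesky_ofLogCholesky]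
end
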